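/- arXiv:2007.15253 — 2 statements merged into one kernel-verified Lean document; each statement's English description precedes it below -/
import Mathlib

section
/- Let q be a prime power, 1 ≤ m ≤ ℓ, and s = gcd(m, ℓ). Then there exists an m-dimensional F_q-subspace U_0 of F_{q^ℓ} such that τ_{U_0} = c or τ_{U_0} = −c for some element c of F_{q^ℓ}^× that is a (q^s − 1)-th power in F_{q^ℓ}^× (equivalently, τ_{U_0} = ±ζ^{x(q^s − 1)} for a primitive element ζ of F_{q^ℓ} and some integer x). -/
open scoped Classical

/-!
Let `E ⊆ F_{q^ℓ}` be the subfield with `q^s` elements (it exists since `s ∣ ℓ`) and let `U₀`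
be an `E`-subspace of `E`-dimension `m / s`. Then `U₀ \ {0}` is a disjoint union of orbits
`w E^×`, and by Wilson's theorem in `E` each orbit contributes `∏_{a ∈ E^×} a w = -w^(q^s - 1)`.
-/

theorem FiniteField.prod_units_smul_eq_neg_pow {E F : Type*} [Field E] [Fintype E] [Field F]
    [Algebra E F] (w : F) : ∏ a : Eˣ, a • w = -w ^ (Fintype.card E - 1) := by
  simp only [Units.smul_def, Algebra.smul_def, Finset.prod_mul_distrib, ← map_prod,
    ← Units.coe_prod, FiniteField.prod_univ_units_id_eq_neg_one, Finset.prod_const,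
    Finset.card_univ, Fintype.card_units]
  simp

theorem Finset.exists_prod_eq_neg_one_pow_mul_pow_of_units_smul_mem {E F : Type*} [Field E]
    [Fintype E] [Field F] [Algebra E F] (S : Finset F) (hS₀ : 0 ∉ S)
    (hS : ∀ a : Eˣ, ∀ x ∈ S, a • x ∈ S) :
    ∃ (k : ℕ) (d : F), d ≠ 0 ∧ ∏ x ∈ S, x = (-1) ^ k * d ^ (Fintype.card E - 1) := by
  induction S using Finset.strongInduction with
  | H S ih =>
  rcases S.eq_empty_or_nonempty with rfl | ⟨w, hw⟩
  · exact ⟨0, 1, one_ne_zero, by simp⟩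
  have hw₀ : w ≠ 0 := ne_of_mem_of_not_mem hw hS₀
  set O := Finset.univ.image fun a : Eˣ => a • w
  have hOS : O ⊆ S := by
    simp only [O, Finset.image_subset_iff]
    exact fun a _ => hS a w hw
  have hwO : w ∈ O := Finset.mem_image.2 ⟨1, Finset.mem_univ _, one_smul _ _⟩
  have hprodO : ∏ x ∈ O, x = -w ^ (Fintype.card E - 1) := by
    refine (Finset.prod_image fun a _ b _ h => ?_).trans (FiniteField.prod_units_smul_eq_neg_pow w)
    exact Units.ext (smul_left_injective E hw₀ (by simpa only [Units.smul_def] using h))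
  have hrest : ∀ a : Eˣ, ∀ x ∈ S \ O, a • x ∈ S \ O := by
    intro a x hx
    simp only [Finset.mem_sdiff, O, Finset.mem_image, Finset.mem_univ, true_and] at hx ⊢
    refine ⟨hS a x hx.1, fun ⟨b, hb⟩ => hx.2 ⟨a⁻¹ * b, ?_⟩⟩
    rw [mul_smul, hb, inv_smul_smul]
  obtain ⟨k, d, hd₀, hd⟩ := ih (S \ O) (Finset.sdiff_ssubset hOS ⟨w, hwO⟩)
    (fun h => hS₀ (Finset.mem_sdiff.1 h).1) hrest
  refine ⟨k + 1, w * d, mul_ne_zero hw₀ hd₀, ?_⟩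
  rw [← Finset.prod_sdiff hOS, hd, hprodO]
  ring

theorem Submodule.exists_finrank_eq {K V : Type*} [DivisionRing K] [AddCommGroup V] [Module K V]
    [FiniteDimensional K V] {k : ℕ} (hk : k ≤ Module.finrank K V) :
    ∃ W : Submodule K V, Module.finrank K W = k := by
  let b := Module.finBasis K V
  refine ⟨span K (Set.range (b ∘ Fin.castLE hk)), ?_⟩
  rw [finrank_span_eq_card (b.linearIndependent.comp _ (Fin.castLE_injective hk)),
    Fintype.card_fin]

theorem FiniteField.exists_intermediateField_finrank_eq {K F : Type*} [Field K] [Finite K]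
    [Field F] [Finite F] [Algebra K F] {s : ℕ} (hs : s ∣ Module.finrank K F) (hs₀ : s ≠ 0) :
    ∃ E : IntermediateField K F, Module.finrank K E = s := by
  have : Fact (ringChar K).Prime := ⟨CharP.char_is_prime K _⟩
  have : NeZero s := ⟨hs₀⟩
  obtain ⟨φ⟩ := FiniteField.nonempty_algHom_of_finrank_dvd (F := K) (L := F)
    (K := FiniteField.Extension K (ringChar K) s) (by rwa [FiniteField.finrank_extension])
  exact ⟨φ.fieldRange, (AlgEquiv.ofInjectiveField φ).toLinearEquiv.finrank_eq.symm.trans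
    (FiniteField.finrank_extension K _ s)⟩

theorem statement8_general {K F : Type*} [Field K] [Field F] [Fintype K] [Fintype F] [Algebra K F]
    (q ℓ m s : ℕ) (hq : Fintype.card K = q) (hℓ : Module.finrank K F = ℓ)
    (hmℓ : m ≤ ℓ) (hs : s = Nat.gcd m ℓ) :
    ∃ U₀ : Submodule K F, Module.finrank K U₀ = m ∧
      ∃ c : F, c ≠ 0 ∧ (∃ d : F, d ≠ 0 ∧ d ^ (q ^ s - 1) = c) ∧
        ((∏ u ∈ Finset.univ.filter (fun u : F => u ∈ U₀ ∧ u ≠ 0), u) = c ∨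
         (∏ u ∈ Finset.univ.filter (fun u : F => u ∈ U₀ ∧ u ≠ 0), u) = -c) := by
  subst hq
  have hs₀ : 0 < s := hs ▸ Nat.gcd_pos_of_pos_right m (hℓ ▸ Module.finrank_pos)
  have hsℓ : s ∣ Module.finrank K F := by rw [hℓ, hs]; exact Nat.gcd_dvd_right m ℓ
  obtain ⟨E, hE⟩ := FiniteField.exists_intermediateField_finrank_eq hsℓ hs₀.ne'
  obtain ⟨k, rfl⟩ : s ∣ m := hs ▸ Nat.gcd_dvd_left m ℓ
  have hk : k ≤ Module.finrank E F := by
    rw [← hℓ, ← Module.finrank_mul_finrank K E F, hE] at hmℓ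
    exact Nat.le_of_mul_le_mul_left hmℓ hs₀
  obtain ⟨W, hW⟩ := Submodule.exists_finrank_eq hk
  refine ⟨W.restrictScalars K, ?_, ?_⟩
  · show Module.finrank K W = s * k
    rw [← Module.finrank_mul_finrank K E W, hE, hW]
  obtain ⟨j, d, hd₀, hprod⟩ :=
    Finset.exists_prod_eq_neg_one_pow_mul_pow_of_units_smul_mem (E := E)
      (Finset.univ.filter fun u : F => u ∈ W.restrictScalars K ∧ u ≠ 0) (by simp)
    (fun a x hx => by
      simp only [Finset.mem_filter, Finset.mem_univ, true_and, Submodule.restrictScalars_mem,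
        ne_eq] at hx ⊢
      exact ⟨W.smul_mem _ hx.1, by simpa [Units.smul_def] using hx.2⟩)
  have hcardE : Fintype.card E = Fintype.card K ^ s := by
    rw [Module.card_eq_pow_finrank (K := K), hE]
  refine ⟨d ^ (Fintype.card E - 1), pow_ne_zero _ hd₀, ⟨d, hd₀, by rw [hcardE]⟩, ?_⟩
  rw [hprod]
  rcases neg_one_pow_eq_or F j with h | h <;> simp [h]

/-- Claim 1: with `s = gcd(m, ℓ)`, there exists an `m`-dimensional `F_q`-subspace `U₀` of
`F_{q^ℓ}` such that `τ_{U₀} = ±c` for some nonzero `c` that is a `(q^s − 1)`-th power in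
`F_{q^ℓ}^×`. -/
theorem statement8 {K F : Type*} [Field K] [Field F] [Fintype K] [Fintype F] [Algebra K F]
    (q ℓ m s : ℕ) (hq : Fintype.card K = q) (hℓ : Module.finrank K F = ℓ)
    (hm1 : 1 ≤ m) (hmℓ : m ≤ ℓ) (hs : s = Nat.gcd m ℓ) :
    ∃ U₀ : Submodule K F, Module.finrank K U₀ = m ∧
      ∃ c : F, c ≠ 0 ∧ (∃ d : F, d ≠ 0 ∧ d ^ (q ^ s - 1) = c) ∧
        ((∏ u ∈ Finset.univ.filter (fun u : F => u ∈ U₀ ∧ u ≠ 0), u) = c ∨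
         (∏ u ∈ Finset.univ.filter (fun u : F => u ∈ U₀ ∧ u ≠ 0), u) = -c) :=
  statement8_general q ℓ m s hq hℓ hmℓ hs
end

section
/- Let q be a prime power, 1 ≤ m ≤ ℓ, and s = gcd(m, ℓ). Suppose there exists an m-dimensional F_q-subspace U_0 of F_{q^ℓ} such that τ_{U_0} or −τ_{U_0} is a (q^s − 1)-th power in F_{q^ℓ}^×. Then there exists an m-dimensional F_q-subspace U of F_{q^ℓ} with τ_U = 1 or τ_U = −1. Moreover, U may be taken of the form U = γ·U_0 for a suitable γ ∈ F_{q^ℓ}^×. -/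
open scoped Classical

/-!
Scaling `U₀` by `γ ≠ 0` multiplies `τ_{U₀}` by `γ ^ (q ^ m - 1)`, so it suffices that
`(±τ_{U₀})⁻¹` is a `(q ^ m - 1)`-th power in `F^×`. In a finite group of order `N`, every
`n`-th power with `gcd(a, N) ∣ n` is an `a`-th power (Bézout), and
`gcd(q ^ m - 1, q ^ ℓ - 1) = q ^ gcd(m, ℓ) - 1`.
-/

theorem exists_pow_eq_pow_of_gcd_card_dvd {G : Type*} [Group G] [Fintype G] (x : G)
    {a n : ℕ} (h : Nat.gcd a (Fintype.card G) ∣ n) : ∃ y : G, y ^ a = x ^ n := by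
  obtain ⟨k, rfl⟩ := h
  refine ⟨x ^ (Nat.gcdA a (Fintype.card G) * k), ?_⟩
  have hcard : x ^ ((Fintype.card G : ℤ) * Nat.gcdB a (Fintype.card G) * k) = 1 := by
    rw [mul_assoc, zpow_mul, zpow_natCast, pow_card_eq_one, one_zpow]
  rw [← zpow_natCast, ← zpow_mul, ← zpow_natCast, Nat.cast_mul, Nat.gcd_eq_gcd_ab]
  rw [← mul_one (x ^ _), ← hcard, ← zpow_add]
  congr 1
  ring

namespace Submodule

variable {K F : Type*} [Field K] [Field F] [Algebra K F]

theorem finrank_map_mulLeft {γ : F} (hγ : γ ≠ 0) (U : Submodule K F) :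
    Module.finrank K (U.map (LinearMap.mulLeft K γ)) = Module.finrank K U :=
  (U.equivMapOfInjective _ (mul_right_injective₀ hγ)).finrank_eq.symm

variable [Fintype F]

/-- `τ_U`. -/
noncomputable def prodNonzero (U : Submodule K F) : F :=
  ∏ u ∈ Finset.univ.filter (fun u : F => u ∈ U ∧ u ≠ 0), u

theorem card_filter_mem_ne_zero [Fintype K] (U : Submodule K F) :
    (Finset.univ.filter (fun u : F => u ∈ U ∧ u ≠ 0)).card =
      Fintype.card K ^ Module.finrank K U - 1 := by
  have hfilter : Finset.univ.filter (fun u : F => u ∈ U ∧ u ≠ 0) =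
      (Finset.univ.filter (fun u : F => u ∈ U)).erase 0 := by
    ext u
    simp only [Finset.mem_filter, Finset.mem_univ, true_and, Finset.mem_erase]
    tauto
  rw [hfilter, Finset.card_erase_of_mem (by simp), ← Module.card_eq_pow_finrank,
    Fintype.card_subtype]

theorem prodNonzero_map_mulLeft [Fintype K] {γ : F} (hγ : γ ≠ 0) (U : Submodule K F) :
    (U.map (LinearMap.mulLeft K γ)).prodNonzero =
      γ ^ (Fintype.card K ^ Module.finrank K U - 1) * U.prodNonzero := by
  have himage : Finset.univ.filter (fun u : F => u ∈ U.map (LinearMap.mulLeft K γ) ∧ u ≠ 0) =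
      (Finset.univ.filter (fun u : F => u ∈ U ∧ u ≠ 0)).image (γ * ·) := by
    ext u
    simp only [Finset.mem_image, Finset.mem_filter, Finset.mem_univ, true_and, mem_map,
      LinearMap.mulLeft_apply]
    constructor
    · rintro ⟨⟨v, hv, rfl⟩, hne⟩
      exact ⟨v, ⟨hv, right_ne_zero_of_mul hne⟩, rfl⟩
    · rintro ⟨v, ⟨hv, hv0⟩, rfl⟩
      exact ⟨⟨v, hv, rfl⟩, mul_ne_zero hγ hv0⟩
  rw [prodNonzero, himage, Finset.prod_image (mul_right_injective₀ hγ).injOn,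
    Finset.prod_mul_distrib, Finset.prod_const, card_filter_mem_ne_zero, prodNonzero]

end Submodule

theorem statement9_general {K F : Type*} [Field K] [Field F] [Fintype K] [Fintype F] [Algebra K F]
    (q ℓ m s : ℕ) (hq : Fintype.card K = q) (hℓ : Module.finrank K F = ℓ)
    (hs : s = Nat.gcd m ℓ)
    (U₀ : Submodule K F) (hU₀ : Module.finrank K U₀ = m)
    (hpow : ∃ d : F, d ≠ 0 ∧
      ((∏ u ∈ Finset.univ.filter (fun u : F => u ∈ U₀ ∧ u ≠ 0), u) = d ^ (q ^ s - 1) ∨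
       -(∏ u ∈ Finset.univ.filter (fun u : F => u ∈ U₀ ∧ u ≠ 0), u) = d ^ (q ^ s - 1))) :
    ∃ γ : F, γ ≠ 0 ∧
      Module.finrank K (U₀.map (LinearMap.mulLeft K γ)) = m ∧
      ((∏ u ∈ Finset.univ.filter
          (fun u : F => u ∈ U₀.map (LinearMap.mulLeft K γ) ∧ u ≠ 0), u) = 1 ∨
       (∏ u ∈ Finset.univ.filter
          (fun u : F => u ∈ U₀.map (LinearMap.mulLeft K γ) ∧ u ≠ 0), u) = -1) := by
  obtain ⟨d, hd, hτ⟩ := hpow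
  have hcard : Fintype.card Fˣ = q ^ ℓ - 1 := by
    rw [Fintype.card_units, Module.card_eq_pow_finrank (K := K), hq, hℓ]
  have hgcd : Nat.gcd (q ^ m - 1) (Fintype.card Fˣ) ∣ q ^ s - 1 := by
    rw [hcard, Nat.pow_sub_one_gcd_pow_sub_one, hs]
  obtain ⟨γ, hγ⟩ := exists_pow_eq_pow_of_gcd_card_dvd (Units.mk0 d hd)⁻¹ hgcd
  have hγd : (γ : F) ^ (q ^ m - 1) * d ^ (q ^ s - 1) = 1 := by
    rw [← Units.val_pow_eq_pow_val, hγ, inv_pow, Units.val_inv_eq_inv_val,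
      Units.val_pow_eq_pow_val, Units.val_mk0, inv_mul_cancel₀ (pow_ne_zero _ hd)]
  refine ⟨γ, γ.ne_zero, by rw [Submodule.finrank_map_mulLeft γ.ne_zero, hU₀], ?_⟩
  change (U₀.map _).prodNonzero = 1 ∨ (U₀.map _).prodNonzero = -1
  rw [Submodule.prodNonzero_map_mulLeft γ.ne_zero, hq, hU₀, Submodule.prodNonzero]
  rcases hτ with hτ | hτ
  · exact Or.inl (by rw [hτ, hγd])
  · exact Or.inr (by rw [← neg_neg (∏ u ∈ _, u), hτ, mul_neg, hγd])

/-- Claim 2: with `s = gcd(m, ℓ)`, if some `m`-dimensional `F_q`-subspace `U₀` of `F_{q^ℓ}`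
has `τ_{U₀}` or `−τ_{U₀}` a `(q^s − 1)`-th power in `F_{q^ℓ}^×`, then a suitable multiple
`U = γ·U₀` is an `m`-dimensional subspace with `τ_U = ±1`. -/
theorem statement9 {K F : Type*} [Field K] [Field F] [Fintype K] [Fintype F] [Algebra K F]
    (q ℓ m s : ℕ) (hq : Fintype.card K = q) (hℓ : Module.finrank K F = ℓ)
    (hm1 : 1 ≤ m) (hmℓ : m ≤ ℓ) (hs : s = Nat.gcd m ℓ)
    (U₀ : Submodule K F) (hU₀ : Module.finrank K U₀ = m)
    (hpow : ∃ d : F, d ≠ 0 ∧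
      ((∏ u ∈ Finset.univ.filter (fun u : F => u ∈ U₀ ∧ u ≠ 0), u) = d ^ (q ^ s - 1) ∨
       -(∏ u ∈ Finset.univ.filter (fun u : F => u ∈ U₀ ∧ u ≠ 0), u) = d ^ (q ^ s - 1))) :
    ∃ γ : F, γ ≠ 0 ∧
      Module.finrank K (U₀.map (LinearMap.mulLeft K γ)) = m ∧
      ((∏ u ∈ Finset.univ.filter
          (fun u : F => u ∈ U₀.map (LinearMap.mulLeft K γ) ∧ u ≠ 0), u) = 1 ∨
       (∏ u ∈ Finset.univ.filter
          (fun u : F => u ∈ U₀.map (LinearMap.mulLeft K γ) ∧ u ≠ 0), u) = -1) :=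
  statement9_general q ℓ m s hq hℓ hs U₀ hU₀ hpow
end
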